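/- arXiv:1007.2866 — 2 statements merged into one kernel-verified Lean document; each statement's English description precedes it below -/
import Mathlib

section
/- Let n ≥ 2, let v ∈ ℝ^(n−1), and let L be the skew-symmetric n×n block matrix [[0, vᵀ],[−v, 0]]. Let e₁ ∈ ℝⁿ be the first standard basis vector. Then the iterated commutator satisfies [E(L), [E(L), P(e₁)]] = −‖v‖² · P(e₁). -/
set_option maxHeartbeats 4000000


open Matrix

/-- For `p` indexed by `ι`, the block matrix `P(p) = [[0, pᵀ],[−p, 0]]`
on the index type `Unit ⊕ ι`. -/
def Pmat {ι : Type} (p : ι → ℝ) : Matrix (Unit ⊕ ι) (Unit ⊕ ι) ℝ :=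
  Matrix.fromBlocks 0 (Matrix.of fun _ j => p j) (Matrix.of fun i _ => -p i) 0

/-- For a square matrix `L` indexed by `ι`, the block matrix `E(L) = [[0, 0],[0, L]]`
on the index type `Unit ⊕ ι`. -/
def Emat {ι : Type} (L : Matrix ι ι ℝ) : Matrix (Unit ⊕ ι) (Unit ⊕ ι) ℝ :=
  Matrix.fromBlocks 0 0 0 L

/-- For `n ≥ 2`, `v ∈ ℝ^(n−1)`, `L = [[0, vᵀ],[−v, 0]] ∈ 𝔰𝔬(n)` and the first standard
basis vector `e₁ ∈ ℝⁿ`, one has `[E(L), [E(L), P(e₁)]] = −‖v‖² P(e₁)`. -/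
theorem iterated_commutator_eq_neg_norm_sq_smul
    (n : ℕ) (hn : 2 ≤ n) (v : EuclideanSpace ℝ (Fin (n - 1))) :
    let L : Matrix (Unit ⊕ Fin (n - 1)) (Unit ⊕ Fin (n - 1)) ℝ :=
      Matrix.fromBlocks 0 (Matrix.of fun _ j => v j) (Matrix.of fun i _ => -v i) 0
    let e₁ : Unit ⊕ Fin (n - 1) → ℝ := Sum.elim (fun _ => 1) (fun _ => 0)
    Emat L * (Emat L * Pmat e₁ - Pmat e₁ * Emat L)
        - (Emat L * Pmat e₁ - Pmat e₁ * Emat L) * Emat L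
      = (-(‖v‖ ^ 2)) • Pmat e₁ := by
  intro L e₁
  have hv : ‖v‖ ^ 2 = ∑ i, v i ^ 2 := by
    rw [EuclideanSpace.norm_eq, Real.sq_sqrt (by positivity)]
    simp [sq_abs]
  ext i j
  rcases i with _ | (_ | i) <;> rcases j with _ | (_ | j) <;>
    simp [Matrix.mul_apply, Pmat, Emat, L, e₁, Fintype.sum_sum_type, hv,
      Finset.mul_sum, Finset.sum_mul, sq, mul_comm]
end

section
/- Let v, e⊥ : ℝ × ℝ → ℝ^(n−1) and e∥ : ℝ × ℝ → ℝ be functions of (τ, l), differentiable in each variable, satisfying for all (τ, l): (i) ∂e⊥/∂l = e∥ • v; (ii) ∂v/∂τ = −e⊥; (iii) e∥ = √(1 − ‖e⊥‖²); and (iv) ‖e⊥‖ < 1. Then e⊥ satisfies the vector sine–Gordon equation ∂/∂τ ( (1 − ‖e⊥‖²)^(−1/2) • ∂e⊥/∂l ) = −e⊥. -/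
/-- The −1 flow equations (with curvature normalized to `1`) together with the
normalization `e∥ = √(1 − ‖e⊥‖²)`, `‖e⊥‖ < 1`, imply the vector sine–Gordon equation
`∂_τ( (1 − ‖e⊥‖²)^(−1/2) ∂_l e⊥ ) = −e⊥`. -/
theorem neg_one_flow_vector_sine_gordon
    (n : ℕ)
    (v eperp : ℝ × ℝ → EuclideanSpace ℝ (Fin (n - 1)))
    (epar : ℝ × ℝ → ℝ)
    (hv_tau : ∀ l, Differentiable ℝ (fun τ => v (τ, l)))
    (hv_l : ∀ τ, Differentiable ℝ (fun l => v (τ, l)))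
    (heperp_tau : ∀ l, Differentiable ℝ (fun τ => eperp (τ, l)))
    (heperp_l : ∀ τ, Differentiable ℝ (fun l => eperp (τ, l)))
    (hepar_tau : ∀ l, Differentiable ℝ (fun τ => epar (τ, l)))
    (hepar_l : ∀ τ, Differentiable ℝ (fun l => epar (τ, l)))
    (h1 : ∀ τ l, deriv (fun l' => eperp (τ, l')) l = epar (τ, l) • v (τ, l))
    (h2 : ∀ τ l, deriv (fun τ' => v (τ', l)) τ = -eperp (τ, l))
    (h3 : ∀ τ l, epar (τ, l) = Real.sqrt (1 - ‖eperp (τ, l)‖ ^ 2))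
    (h4 : ∀ τ l, ‖eperp (τ, l)‖ < 1) :
    ∀ τ l, deriv
        (fun τ' => ((1 - ‖eperp (τ', l)‖ ^ 2) ^ (-(1 : ℝ) / 2)) •
          deriv (fun l' => eperp (τ', l')) l) τ
      = -eperp (τ, l) := by
  intro τ l
  have key : (fun τ' => ((1 - ‖eperp (τ', l)‖ ^ 2) ^ (-(1 : ℝ) / 2)) •
      deriv (fun l' => eperp (τ', l')) l) = fun τ' => v (τ', l) := by
    funext τ'
    rw [h1, h3, smul_smul]
    have hpos : 0 < 1 - ‖eperp (τ', l)‖ ^ 2 := by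
      nlinarith [h4 τ' l, norm_nonneg (eperp (τ', l))]
    have hone : (1 - ‖eperp (τ', l)‖ ^ 2) ^ (-(1 : ℝ) / 2) *
        Real.sqrt (1 - ‖eperp (τ', l)‖ ^ 2) = 1 := by
      rw [Real.sqrt_eq_rpow, ← Real.rpow_add hpos]
      norm_num
    rw [hone, one_smul]
  rw [key, h2]
end
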